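/- arXiv:2602.19765 — 4 statements merged into one kernel-verified Lean document; each statement's English description precedes it below -/
import Mathlib

section
/- Let R and S be polynomial rings in finitely many variables over a field, both graded by the same finitely generated abelian group D via degrees assigned to the variables, and assume both gradings are effective (D is generated by the degrees of the variables). Then for any morphism φ: R → S of D-graded rings (with α = id_D), φ maps relevant elements of R to relevant elements of S. -/
open scoped TensorProduct
open MvPolynomial

/-- The canonical map `D → D_ℝ = ℝ ⊗[ℤ] D`. -/
noncomputable def toReal (D : Type*) [AddCommGroup D] (d : D) : ℝ ⊗[ℤ] D :=
  (1 : ℝ) ⊗ₜ[ℤ] d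

/-- Relevance of `f` in a `D`-graded polynomial ring (grading by weighted degrees `w`):
the degrees of homogeneous divisors of powers of `f` span `D_ℝ`,
i.e. the weight cone of `f` is full-dimensional. -/
def RelevantW {k D : Type*} [CommRing k] [AddCommGroup D] {σ : Type*}
    (w : σ → D) (f : MvPolynomial σ k) : Prop :=
  Submodule.span ℝ (toReal D ''
    {d : D | ∃ (j : ℕ) (h : MvPolynomial σ k), IsWeightedHomogeneous w h d ∧ h ∣ f ^ j}) = ⊤

/-- For polynomial rings `R = k[T_1,…,T_m]`, `S = k[T_1,…,T_n]` effectively graded by the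
same finitely generated abelian group `D`, every morphism of `D`-graded rings maps
relevant elements to relevant elements. -/
theorem graded_ringHom_maps_relevant_to_relevant
    {k D : Type*} [Field k] [AddCommGroup D] [AddGroup.FG D]
    {m n : ℕ} (wR : Fin m → D) (wS : Fin n → D)
    (heffR : AddSubgroup.closure (Set.range wR) = ⊤)
    (heffS : AddSubgroup.closure (Set.range wS) = ⊤)
    (φ : MvPolynomial (Fin m) k →+* MvPolynomial (Fin n) k)
    (hgr : ∀ (d : D) (p : MvPolynomial (Fin m) k),
      IsWeightedHomogeneous wR p d → IsWeightedHomogeneous wS (φ p) d)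
    (g : MvPolynomial (Fin m) k) (hrel : RelevantW wR g) :
    RelevantW wS (φ g) := by
  refine top_unique ?_
  rw [← hrel]
  refine Submodule.span_mono (Set.image_mono ?_)
  rintro d ⟨j, h, hh, hdvd⟩
  exact ⟨j, φ h, hgr d h hh, by rw [← map_pow]; exact map_dvd φ hdvd⟩
end

section
/- Let S be a multigraded polynomial ring k[T_1,…,T_n] graded by a finitely generated abelian group D of rank r via γ: ℤ^n → D, e_i ↦ deg(T_i), with M = ker(γ) of rank n − r. For a squarefree relevant monomial f = ∏_{i ∈ J_f} T_i with |J_f| = r, let σ_f ⊆ Hom(M, ℝ) be the cone generated by the restrictions to M of the coordinate projections pr_i for i ∈ {1,…,n} \ J_f. Then σ_f has dimension n − r, i.e. σ_f is a full-dimensional cone in Hom(M, ℝ) ≅ ℝ^{n−r}. -/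
/-!
The real extension `γ_ℝ : ℝ^n → D_ℝ` of `γ` kills `M_ℝ`. The `r` degrees `γ_ℝ(e_i)`, `i ∈ J`,
span the `r`-dimensional space `D_ℝ`, so they are linearly independent, and therefore the only
vector of `M_ℝ` supported on `J` is `0`. Thus the projections `pr_i`, `i ∉ J`, have no common zero
on `M_ℝ` other than `0`, which in finite dimension means they span `Hom(M_ℝ, ℝ)`.
-/

open scoped TensorProduct

theorem Subspace.span_eq_top_of_forall_apply_eq_zero {K V : Type*} [Field K] [AddCommGroup V]
    [Module K V] [FiniteDimensional K V] (s : Set (Module.Dual K V))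
    (h : ∀ x : V, (∀ φ ∈ s, φ x = 0) → x = 0) : Submodule.span K s = ⊤ := by
  have hbot : (Submodule.span K s).dualCoannihilator = ⊥ := by
    refine (Submodule.eq_bot_iff _).mpr fun x hx => h x ?_
    rwa [← SetLike.mem_coe, Submodule.coe_dualCoannihilator_span] at hx
  rw [← Subspace.dualCoannihilator_dualAnnihilator_eq (W := Submodule.span K s), hbot,
    Submodule.dualAnnihilator_bot]

theorem LinearMap.eq_zero_of_apply_eq_zero_of_support_subset {ι R W : Type*} [Fintype ι]
    [DecidableEq ι] [Ring R] [AddCommGroup W] [Module R W] (g : (ι → R) →ₗ[R] W)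
    {J : Finset ι} (hli : LinearIndependent R fun i : J => g (Pi.single i 1))
    {x : ι → R} (hx : g x = 0) (hsupp : ∀ i ∉ J, x i = 0) : x = 0 := by
  have hsum : ∑ i : J, x i • g (Pi.single i 1) = 0 := by
    rw [← hx, Finset.sum_coe_sort J fun i => x i • g (Pi.single i 1)]
    conv_rhs => rw [← Finset.univ_sum_single x, map_sum]
    rw [← Finset.sum_subset J.subset_univ fun i _ hi => by
      rw [hsupp i hi, Pi.single_zero, map_zero]]
    refine Finset.sum_congr rfl fun i _ => ?_
    rw [← map_smul, ← Pi.single_smul', smul_eq_mul, mul_one]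
  funext i
  by_cases hi : i ∈ J
  · exact Fintype.linearIndependent_iff.mp hli (fun j => x j) hsum ⟨i, hi⟩
  · exact hsupp i hi

section RealDegreeMap

variable {ι D : Type*} [Fintype ι] [DecidableEq ι] [AddCommGroup D]

noncomputable def realDegreeMap (γ : (ι → ℤ) →ₗ[ℤ] D) : (ι → ℝ) →ₗ[ℝ] ℝ ⊗[ℤ] D :=
  γ.baseChange ℝ ∘ₗ (TensorProduct.piScalarRight ℤ ℝ ℝ ι).symm.toLinearMap

theorem realDegreeMap_intCast (γ : (ι → ℤ) →ₗ[ℤ] D) (v : ι → ℤ) :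
    realDegreeMap γ (fun i => (v i : ℝ)) = toReal D (γ v) := by
  have : (TensorProduct.piScalarRight ℤ ℝ ℝ ι).symm (fun i => (v i : ℝ)) = 1 ⊗ₜ v := by
    rw [LinearEquiv.symm_apply_eq]
    ext i
    simp
  simp [realDegreeMap, this, toReal]

theorem realDegreeMap_single (γ : (ι → ℤ) →ₗ[ℤ] D) (i : ι) :
    realDegreeMap γ (Pi.single i 1) = toReal D (γ (Pi.single i 1)) := by
  simp [realDegreeMap, toReal]

theorem span_intCast_ker_le_ker_realDegreeMap (γ : (ι → ℤ) →ₗ[ℤ] D) :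
    Submodule.span ℝ ((fun v : ι → ℤ => fun i => (v i : ℝ)) '' (LinearMap.ker γ : Set (ι → ℤ)))
      ≤ LinearMap.ker (realDegreeMap γ) := by
  rw [Submodule.span_le]
  rintro _ ⟨v, hv, rfl⟩
  simp [realDegreeMap_intCast, toReal, LinearMap.mem_ker.mp hv]

end RealDegreeMap

theorem sigma_cone_full_dimensional_general
    {D : Type*} [AddCommGroup D] [AddGroup.FG D]
    (n r : ℕ)
    (γ : (Fin n → ℤ) →ₗ[ℤ] D)
    (hrk : Module.finrank ℝ (ℝ ⊗[ℤ] D) = r)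
    (J : Finset (Fin n)) (hJcard : J.card = r)
    -- `f = ∏_{i ∈ J} T_i` is relevant: the degrees of its variables span `D_ℝ`
    (hrel : Submodule.span ℝ ((fun i => toReal D (γ (Pi.single i 1))) '' ↑J) = ⊤)
    (M : Submodule ℤ (Fin n → ℤ)) (hM : M = LinearMap.ker γ)
    -- the realification `M_ℝ ⊆ ℝ^n` of `M`
    (MR : Submodule ℝ (Fin n → ℝ))
    (hMR : MR = Submodule.span ℝ
      ((fun v : Fin n → ℤ => fun i => (v i : ℝ)) '' (M : Set (Fin n → ℤ))))
    (hMrk : Module.finrank ℝ MR = n - r) :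
    Submodule.span ℝ {φ : Module.Dual ℝ MR |
        ∃ i ∉ J, φ = (LinearMap.proj i : (Fin n → ℝ) →ₗ[ℝ] ℝ).comp MR.subtype} = ⊤ ∧
    Module.finrank ℝ (Module.Dual ℝ MR) = n - r := by
  have : Module.Finite ℤ D := Module.Finite.iff_addGroup_fg.mpr ‹_›
  have hli : LinearIndependent ℝ fun i : J => toReal D (γ (Pi.single i 1)) :=
    linearIndependent_of_top_le_span_of_card_eq_finrank
      (by rw [← hrel, Set.image_eq_range]; exact le_rfl) (by rw [Fintype.card_coe, hJcard, hrk])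
  refine ⟨Subspace.span_eq_top_of_forall_apply_eq_zero _ ?_, by
    rw [Subspace.dual_finrank_eq, hMrk]⟩
  rintro ⟨x, hx⟩ hzero
  have hxker : realDegreeMap γ x = 0 := by
    subst hM hMR
    exact span_intCast_ker_le_ker_realDegreeMap γ hx
  ext1
  refine (realDegreeMap γ).eq_zero_of_apply_eq_zero_of_support_subset ?_ hxker
    fun i hi => hzero _ ⟨i, hi, rfl⟩
  simpa only [realDegreeMap_single] using hli

/-- For a `D`-graded polynomial ring `k[T_1,…,T_n]` graded via `γ : ℤ^n → D` with
`M = ker γ`, and a squarefree relevant monomial `f` with support `J` of cardinality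
`r = rank D`, the cone `σ_f` generated by the restricted coordinate projections
`pr_i|_M` for `i ∉ J` is full-dimensional in `Hom(M, ℝ) ≅ ℝ^{n−r}`. -/
theorem sigma_cone_full_dimensional
    {D : Type*} [AddCommGroup D] [AddGroup.FG D]
    (n r : ℕ) (hrn : r < n)
    (γ : (Fin n → ℤ) →ₗ[ℤ] D)
    (hrk : Module.finrank ℝ (ℝ ⊗[ℤ] D) = r)
    (J : Finset (Fin n)) (hJcard : J.card = r)
    -- `f = ∏_{i ∈ J} T_i` is relevant: the degrees of its variables span `D_ℝ`
    (hrel : Submodule.span ℝ ((fun i => toReal D (γ (Pi.single i 1))) '' ↑J) = ⊤)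
    (M : Submodule ℤ (Fin n → ℤ)) (hM : M = LinearMap.ker γ)
    -- the realification `M_ℝ ⊆ ℝ^n` of `M`
    (MR : Submodule ℝ (Fin n → ℝ))
    (hMR : MR = Submodule.span ℝ
      ((fun v : Fin n → ℤ => fun i => (v i : ℝ)) '' (M : Set (Fin n → ℤ))))
    (hMrk : Module.finrank ℝ MR = n - r) :
    Submodule.span ℝ {φ : Module.Dual ℝ MR |
        ∃ i ∉ J, φ = (LinearMap.proj i : (Fin n → ℝ) →ₗ[ℝ] ℝ).comp MR.subtype} = ⊤ ∧
    Module.finrank ℝ (Module.Dual ℝ MR) = n - r :=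
  sigma_cone_full_dimensional_general n r γ hrk J hJcard hrel M hM MR hMR hMrk
end

section
/- Let S be a ℤ/2ℤ-graded polynomial ring k[x] with deg(x) = 1̄ (the grading given by γ: ℤ → ℤ/2ℤ, 1 ↦ 1̄). Then the element 1 ∈ S is relevant, the degree-zero part S_{(x)} of the localization equals k[x²], and Proj^{ℤ/2ℤ}(S) ≅ Spec(k[x²]) ≅ 𝔸¹_k is affine. -/
/-- The `ℤ/2ℤ`-grading of `k[x]` given by `deg x = 1̄`: a polynomial is homogeneous of
degree `d` if all its monomials `x^n` satisfy `n̄ = d`. -/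
def Hdeg {k : Type*} [Field k] (p : Polynomial k) (d : ZMod 2) : Prop :=
  ∀ n : ℕ, p.coeff n ≠ 0 → (n : ZMod 2) = d

/-- Homogeneity of degree `d` for an element of the localization `S_f`
(`f` homogeneous of degree `e`). -/
def HomogLoc9 {k : Type*} [Field k] (f : Polynomial k) (e : ZMod 2)
    (x : Localization.Away f) (d : ZMod 2) : Prop :=
  ∃ (s : Polynomial k) (n : ℕ) (m : ZMod 2), Hdeg s m ∧
    x * algebraMap (Polynomial k) (Localization.Away f) (f ^ n) =
      algebraMap (Polynomial k) (Localization.Away f) s ∧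
    d + n • e = m

/-- Relevance for the `ℤ/2ℤ`-graded ring `k[x]`. -/
def Rel9 {k : Type*} [Field k] (f : Polynomial k) (e : ZMod 2) : Prop :=
  (AddSubgroup.closure {d : ZMod 2 | ∃ u : (Localization.Away f)ˣ,
      HomogLoc9 f e (u : Localization.Away f) d}).FiniteIndex


/-!
Relevance is automatic because `ℤ/2ℤ` is finite, so every subgroup has finite index. The
degree-zero polynomials are those supported in even degrees, which is the image of the
injective substitution `x ↦ x²` (`Polynomial.expand k 2`); that image is `k[x²]`, and
injectivity identifies it with `k[t]`.
-/

namespace Polynomial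

variable {R : Type*} [CommSemiring R]

theorem mem_range_expand_iff {p : ℕ} (hp : 0 < p) {f : R[X]} :
    f ∈ (expand R p).range ↔ ∀ n, f.coeff n ≠ 0 → p ∣ n := by
  rw [AlgHom.mem_range]
  constructor
  · rintro ⟨g, rfl⟩ n hn
    rw [coeff_expand hp] at hn
    by_contra hpn
    exact hn (if_neg hpn)
  · intro hf
    refine ⟨contract p f, ext fun n => ?_⟩
    rw [coeff_expand hp, coeff_contract hp.ne']
    split_ifs with hpn
    · rw [Nat.div_mul_cancel hpn]
    · exact (not_imp_comm.mp (hf n) hpn).symm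

theorem adjoin_X_pow_eq_range_expand (p : ℕ) :
    Algebra.adjoin R {(X : R[X]) ^ p} = (expand R p).range := by
  rw [Algebra.adjoin_singleton_eq_range_aeval]
  rfl

end Polynomial

open Polynomial

theorem hdeg_zero_iff {k : Type*} [Field k] (p : k[X]) :
    Hdeg p 0 ↔ ∀ n, p.coeff n ≠ 0 → 2 ∣ n := by
  simp only [Hdeg, ZMod.natCast_eq_zero_iff]

/-- For `S = k[x]` graded by `ℤ/2ℤ` with `deg x = 1̄`: the element `1` is relevant, the
degree-zero part `S_{(1)}` equals `k[x²]`, and `Proj^{ℤ/2ℤ}(S) = Spec k[x²] ≅ 𝔸¹_k`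
(expressed by `k[x²] ≅ k[t]` as `k`-algebras). -/
theorem zmod2_graded_polynomial_proj_affine (k : Type*) [Field k] :
    Rel9 (1 : Polynomial k) 0 ∧
    {p : Polynomial k | Hdeg p 0} =
      (Algebra.adjoin k {(Polynomial.X : Polynomial k) ^ 2} : Subalgebra k (Polynomial k)) ∧
    Nonempty (Polynomial k ≃ₐ[k]
      Algebra.adjoin k {(Polynomial.X : Polynomial k) ^ 2}) := by
  refine ⟨inferInstanceAs (AddSubgroup.FiniteIndex _), ?_, ?_⟩
  · ext p
    simp only [Set.mem_ofPred_eq, SetLike.mem_coe, hdeg_zero_iff, adjoin_X_pow_eq_range_expand,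
      mem_range_expand_iff two_pos]
  · exact ⟨(AlgEquiv.ofInjective _ (expand_injective two_pos)).trans
      (Subalgebra.equivOfEq _ _ (adjoin_X_pow_eq_range_expand 2).symm)⟩
end

section
/- Let S be a D-graded ring, f, g ∈ S homogeneous relevant elements. Suppose the interiors of the weight cones C_D(f) and C_D(g) intersect, i.e. there exist k, l ≥ 1 and homogeneous h₁ ∣ f^k, h₂ ∣ g^l with deg(h₁) = deg(h₂) lying in the interior of both cones. Then there exists a homogeneous element of degree zero in the localization S_{fg} of the form h₁/h₂ that maps units to units; in particular, in the polynomial case S = k[T_1,…,T_n] with squarefree monomials f = ∏_{i∈I} T_i and g = ∏_{j∈J} T_j, an interior intersection point yields positive integers ε_i (i ∈ I), δ_j (j ∈ J) with Σ_{i∈I} ε_i deg(T_i) = Σ_{j∈J} δ_j deg(T_j). -/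
open scoped TensorProduct
open MvPolynomial

theorem exists_rat_linearMap_pos_of_finiteDimensional {V α : Type*} [AddCommGroup V]
    [Module ℚ V] [FiniteDimensional ℚ V] [Finite α] (φ : V →ₗ[ℚ] ℝ) (x : α → V)
    (hx : ∀ a, 0 < φ (x a)) : ∃ π : V →ₗ[ℚ] ℚ, ∀ a, 0 < π (x a) := by
  let b := Module.finBasis ℚ V
  -- `F v t` is the value at `v` of the real functional taking the values `t` on the basis `b`.
  let F : V → (Fin (Module.finrank ℚ V) → ℝ) → ℝ := fun v t => ∑ k, (b.repr v k : ℝ) * t k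
  have hF : ∀ v, F v (fun k => φ (b k)) = φ v := fun v => by
    conv_rhs => rw [← b.sum_repr v, map_sum]
    simp [F, Rat.smul_def]
  have hU : IsOpen {t | ∀ a, 0 < F (x a) t} := by
    simp only [Set.ofPred_forall]
    exact isOpen_iInter_of_finite fun a => isOpen_lt continuous_const (by fun_prop)
  obtain ⟨q, hq⟩ := (DenseRange.piMap fun _ => Rat.denseRange_cast).exists_mem_open
    hU ⟨_, fun a => (hF (x a)).symm ▸ hx a⟩
  refine ⟨∑ k, q k • b.coord k, fun a => ?_⟩
  have hpos : (0 : ℚ) < ∑ k, b.repr (x a) k * q k := by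
    have := hq a
    simp only [F, Pi.map_apply] at this
    exact_mod_cast this
  simpa [mul_comm] using hpos

theorem exists_rat_linearMap_pos {α : Type*} [Finite α] (x : α → ℝ) (hx : ∀ a, 0 < x a) :
    ∃ π : ℝ →ₗ[ℚ] ℚ, ∀ a, 0 < π (x a) := by
  let V := Submodule.span ℚ (Set.range x)
  have : FiniteDimensional ℚ V := FiniteDimensional.span_of_finite ℚ (Set.finite_range x)
  obtain ⟨π₀, hπ₀⟩ := exists_rat_linearMap_pos_of_finiteDimensional V.subtype
    (fun a => ⟨x a, Submodule.subset_span (Set.mem_range_self a)⟩) hx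
  obtain ⟨π, hπ⟩ := LinearMap.exists_extend π₀
  exact ⟨π, fun a => (hπ₀ a).trans_eq (LinearMap.congr_fun hπ _).symm⟩

theorem exists_rat_linearMap_map_one_pos {α : Type*} [Finite α] (x : α → ℝ) (hx : ∀ a, 0 < x a) :
    ∃ π : ℝ →ₗ[ℚ] ℚ, π 1 = 1 ∧ ∀ a, 0 < π (x a) := by
  obtain ⟨π, hπ⟩ := exists_rat_linearMap_pos (fun o : Option α => o.elim 1 x)
    (Option.rec one_pos hx)
  have h1 : 0 < π 1 := hπ none
  exact ⟨(π 1)⁻¹ • π, by simp [h1.ne'], fun a => by simpa using mul_pos (inv_pos.2 h1) (hπ a)⟩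

theorem exists_pos_mul_eq_natCast {ι : Type*} (s : Finset ι) (q : ι → ℚ)
    (hq : ∀ i ∈ s, 0 ≤ q i) : ∃ M : ℕ, 0 < M ∧ ∃ p : ι → ℕ, ∀ i ∈ s, (p i : ℚ) = M * q i := by
  obtain ⟨b, hb⟩ := IsLocalization.exist_integer_multiples (nonZeroDivisors ℤ) s q
  choose! z hz using hb
  refine ⟨(b : ℤ).natAbs, Int.natAbs_pos.2 (nonZeroDivisors.coe_ne_zero b), fun i => (z i).natAbs,
    fun i hi => ?_⟩
  have hzi : (z i : ℚ) = b * q i := by simpa using hz i hi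
  rw [Nat.cast_natAbs, Int.cast_abs, hzi, Nat.cast_natAbs, Int.cast_abs, abs_mul,
    abs_of_nonneg (hq i hi)]

theorem exists_pos_nsmul_eq_zero_of_one_tmul_eq_zero {D : Type*} [AddCommGroup D] {x : D}
    (hx : (1 : ℚ) ⊗ₜ[ℤ] x = 0) : ∃ t : ℕ, 0 < t ∧ t • x = 0 := by
  have := (isLocalizedModule_iff_isBaseChange (nonZeroDivisors ℤ) ℚ
    (TensorProduct.mk ℤ ℚ D 1)).2 (TensorProduct.isBaseChange ℤ D ℚ)
  obtain ⟨r, hr⟩ := (IsLocalizedModule.eq_zero_iff (nonZeroDivisors ℤ)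
    (TensorProduct.mk ℤ ℚ D 1)).1 hx
  refine ⟨(r : ℤ).natAbs, Int.natAbs_pos.2 (nonZeroDivisors.coe_ne_zero r), ?_⟩
  rcases Int.natAbs_eq (r : ℤ) with h | h
  · rw [← natCast_zsmul, ← h]; exact hr
  · rw [← natCast_zsmul, ← neg_eq_iff_eq_neg.2 h, neg_smul, neg_eq_zero]; exact hr

theorem exists_nat_relation_of_one_tmul_eq_sum {D ι : Type*} [AddCommGroup D] (s : Finset ι)
    (w : ι → D) (d : D) (q : ι → ℚ) (hq : ∀ i ∈ s, 0 < q i)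
    (h : (1 : ℚ) ⊗ₜ[ℤ] d = ∑ i ∈ s, q i ⊗ₜ[ℤ] w i) :
    ∃ N : ℕ, 0 < N ∧ ∃ p : ι → ℕ, (∀ i ∈ s, 0 < p i) ∧ ∑ i ∈ s, p i • w i = N • d := by
  obtain ⟨M, hM, p, hp⟩ := exists_pos_mul_eq_natCast s q fun i hi => (hq i hi).le
  have hrel : (1 : ℚ) ⊗ₜ[ℤ] (∑ i ∈ s, p i • w i - M • d) = 0 :=
    calc _ = M • (∑ i ∈ s, q i ⊗ₜ[ℤ] w i - (1 : ℚ) ⊗ₜ[ℤ] d) := by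
          simp only [TensorProduct.tmul_sub, TensorProduct.tmul_sum, smul_sub, Finset.smul_sum,
            TensorProduct.tmul_smul, TensorProduct.smul_tmul', nsmul_eq_mul, mul_one]
          congr 1
          exact Finset.sum_congr rfl fun i hi => by rw [hp i hi]
      _ = 0 := by rw [h, sub_self, smul_zero]
  obtain ⟨t, ht, htx⟩ := exists_pos_nsmul_eq_zero_of_one_tmul_eq_zero hrel
  refine ⟨t * M, Nat.mul_pos ht hM, fun i => t * p i, fun i hi => Nat.mul_pos ht ?_, ?_⟩
  · exact_mod_cast (hp i hi).symm ▸ mul_pos (Nat.cast_pos.2 hM) (hq i hi)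
  · rw [smul_sub, sub_eq_zero, Finset.smul_sum] at htx
    simpa only [mul_smul] using htx

theorem exists_nat_relation_of_toReal_eq_sum {D ι : Type*} [AddCommGroup D] (s : Finset ι)
    (w : ι → D) (d : D) (c : ι → ℝ) (hc : ∀ i ∈ s, 0 < c i)
    (h : toReal D d = ∑ i ∈ s, c i • toReal D (w i)) :
    ∃ N : ℕ, 0 < N ∧ ∃ p : ι → ℕ, (∀ i ∈ s, 0 < p i) ∧ ∑ i ∈ s, p i • w i = N • d := by
  obtain ⟨π, hπ1, hπ⟩ := exists_rat_linearMap_map_one_pos (fun i : s => c i) fun i => hc i i.2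
  refine exists_nat_relation_of_one_tmul_eq_sum s w d (fun i => π (c i))
    (fun i hi => hπ ⟨i, hi⟩) ?_
  simpa [toReal, TensorProduct.smul_tmul', hπ1] using
    congrArg (LinearMap.rTensor D (π.restrictScalars ℤ)) h

theorem IsLocalization.Away.isUnit_of_dvd_pow {R S : Type*} [CommSemiring R] [CommSemiring S]
    [Algebra R S] {r b : R} [IsLocalization.Away r S] {n : ℕ} (hb : b ∣ r ^ n) :
    IsUnit (algebraMap R S b) :=
  isUnit_of_dvd_unit (map_dvd _ hb) (by simpa using (algebraMap_isUnit (S := S) r).pow n)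

theorem interior_intersection_gives_positive_relation_general
    {κ D : Type*} [Field κ] [AddCommGroup D]
    {n : ℕ} (w : Fin n → D) (I J : Finset (Fin n))
    (f g : MvPolynomial (Fin n) κ)
    (l : ℕ)
    (h₁ h₂ : MvPolynomial (Fin n) κ) (d : D)
    (hdiv₂ : h₂ ∣ g ^ l)
    (hintI : ∃ c : Fin n → ℝ, (∀ i ∈ I, 0 < c i) ∧
      toReal D d = ∑ i ∈ I, c i • toReal D (w i))
    (hintJ : ∃ c : Fin n → ℝ, (∀ j ∈ J, 0 < c j) ∧
      toReal D d = ∑ j ∈ J, c j • toReal D (w j)) :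
    (∃ x : Localization.Away (f * g),
      x * algebraMap (MvPolynomial (Fin n) κ) (Localization.Away (f * g)) h₂ =
        algebraMap (MvPolynomial (Fin n) κ) (Localization.Away (f * g)) h₁) ∧
    (∃ ε δ : Fin n → ℕ, (∀ i ∈ I, 1 ≤ ε i) ∧ (∀ j ∈ J, 1 ≤ δ j) ∧
      ∑ i ∈ I, ε i • w i = ∑ j ∈ J, δ j • w j) := by
  refine ⟨?_, ?_⟩
  · obtain ⟨u, hu⟩ : IsUnit (algebraMap _ (Localization.Away (f * g)) h₂) :=
      IsLocalization.Away.isUnit_of_dvd_pow (hdiv₂.trans (mul_pow f g l ▸ dvd_mul_left _ _))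
    exact ⟨algebraMap _ _ h₁ * ↑u⁻¹, by rw [← hu, mul_assoc, Units.inv_mul, mul_one]⟩
  · obtain ⟨c₁, hc₁, he₁⟩ := hintI
    obtain ⟨c₂, hc₂, he₂⟩ := hintJ
    obtain ⟨N₁, hN₁, p₁, hp₁, hr₁⟩ := exists_nat_relation_of_toReal_eq_sum I w d c₁ hc₁ he₁
    obtain ⟨N₂, hN₂, p₂, hp₂, hr₂⟩ := exists_nat_relation_of_toReal_eq_sum J w d c₂ hc₂ he₂
    refine ⟨fun i => N₂ * p₁ i, fun j => N₁ * p₂ j, fun i hi => Nat.mul_pos hN₂ (hp₁ i hi),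
      fun j hj => Nat.mul_pos hN₁ (hp₂ j hj), ?_⟩
    calc ∑ i ∈ I, (N₂ * p₁ i) • w i = N₂ • N₁ • d := by
          simp only [mul_smul, ← Finset.smul_sum, hr₁]
      _ = N₁ • N₂ • d := smul_comm _ _ _
      _ = ∑ j ∈ J, (N₁ * p₂ j) • w j := by
          simp only [mul_smul, ← Finset.smul_sum, hr₂]

/-- Let `S = k[T_1,…,T_n]` be `D`-graded via `w`, and let `f = ∏_{i∈I} T_i`,
`g = ∏_{j∈J} T_j` be squarefree monomials. If there are `k, l ≥ 1` and homogeneous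
`h₁ ∣ f^k`, `h₂ ∣ g^l` of the same degree `d` lying in the interior of both weight cones
(i.e. `d` is a strictly positive combination of the degrees over `I` and over `J`), then
`h₁/h₂` makes sense as a degree-zero element of `S_{fg}`, and there are positive integers
`ε_i (i ∈ I)`, `δ_j (j ∈ J)` with `Σ_{i∈I} ε_i deg(T_i) = Σ_{j∈J} δ_j deg(T_j)`. -/
theorem interior_intersection_gives_positive_relation
    {κ D : Type*} [Field κ] [AddCommGroup D] [AddGroup.FG D]
    {n : ℕ} (w : Fin n → D) (I J : Finset (Fin n))
    (f g : MvPolynomial (Fin n) κ)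
    (hf : f = ∏ i ∈ I, X i) (hg : g = ∏ j ∈ J, X j)
    (k l : ℕ) (hk : 1 ≤ k) (hl : 1 ≤ l)
    (h₁ h₂ : MvPolynomial (Fin n) κ) (d : D)
    (hdiv₁ : h₁ ∣ f ^ k) (hdiv₂ : h₂ ∣ g ^ l)
    (hhom₁ : IsWeightedHomogeneous w h₁ d) (hhom₂ : IsWeightedHomogeneous w h₂ d)
    (hintI : ∃ c : Fin n → ℝ, (∀ i ∈ I, 0 < c i) ∧
      toReal D d = ∑ i ∈ I, c i • toReal D (w i))
    (hintJ : ∃ c : Fin n → ℝ, (∀ j ∈ J, 0 < c j) ∧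
      toReal D d = ∑ j ∈ J, c j • toReal D (w j)) :
    (∃ x : Localization.Away (f * g),
      x * algebraMap (MvPolynomial (Fin n) κ) (Localization.Away (f * g)) h₂ =
        algebraMap (MvPolynomial (Fin n) κ) (Localization.Away (f * g)) h₁) ∧
    (∃ ε δ : Fin n → ℕ, (∀ i ∈ I, 1 ≤ ε i) ∧ (∀ j ∈ J, 1 ≤ δ j) ∧
      ∑ i ∈ I, ε i • w i = ∑ j ∈ J, δ j • w j) :=
  interior_intersection_gives_positive_relation_general w I J f g l h₁ h₂ d hdiv₂ hintI hintJ
end
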